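/- The reordering derivative is a ∼-invariant right action: for every language L over Σ, (1) D^I_ε L = L; (2) for all words u, v, D^I_{u++v} L = D^I_v (D^I_u L); and (3) for all words u, u′ with u ∼ u′, D^I_u L = D^I_{u′} L. -/

import Mathlib

open RegularExpression
open scoped Classical

universe u

variable {α : Type u}

/-- Two words are independent if every letter of the first is independent
of every letter of the second. -/
def WIndep (I : α → α → Prop) (u v : List α) : Prop :=
  ∀ a ∈ u, ∀ b ∈ v, I a b

/-- Trace equivalence: the least equivalence relation on words containing
all pairs (x ++ [a,b] ++ y, x ++ [b,a] ++ y) with a I b. -/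
inductive TrEq (I : α → α → Prop) : List α → List α → Prop
  | swap (x y : List α) {a b : α} : I a b → TrEq I (x ++ [a, b] ++ y) (x ++ [b, a] ++ y)
  | refl (u : List α) : TrEq I u u
  | symm {u v : List α} : TrEq I u v → TrEq I v u
  | trans {u v w : List α} : TrEq I u v → TrEq I v w → TrEq I u w

/-- Trace closure of a language. -/
def TrClosure (I : α → α → Prop) (L : Set (List α)) : Set (List α) :=
  {w | ∃ z ∈ L, TrEq I w z}

/-- u ⊲ z ⊳ v with exactly n blocks of u: there are nonempty words u₁,…,uₙ and
words v₀,…,vₙ (with v₁,…,v_{n-1} nonempty) such that u = u₁⋯uₙ, v = v₀⋯vₙ,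
z = v₀u₁v₁⋯uₙvₙ and vⱼ I uᵢ whenever j < i. -/
def ScatN (I : α → α → Prop) (n : ℕ) (u z v : List α) : Prop :=
  ∃ us vs : ℕ → List α,
    (∀ i, 1 ≤ i → i ≤ n → us i ≠ []) ∧
    (∀ j, 1 ≤ j → j ≤ n - 1 → vs j ≠ []) ∧
    u = ((List.range n).map (fun i => us (i + 1))).flatten ∧
    v = ((List.range (n + 1)).map vs).flatten ∧
    z = vs 0 ++ ((List.range n).map (fun i => us (i + 1) ++ vs (i + 1))).flatten ∧
    (∀ i j, 1 ≤ i → i ≤ n → j < i → WIndep I (vs j) (us i))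

/-- u ⊲ z ⊳ v -/
def Scat (I : α → α → Prop) (u z v : List α) : Prop :=
  ∃ n, ScatN I n u z v

/-- u ∼⊲ z ⊳ v -/
def EqScat (I : α → α → Prop) (u z v : List α) : Prop :=
  ∃ u', TrEq I u u' ∧ Scat I u' z v

/-- u ∼⊲ z ⊳∼ v -/
def EqScatEq (I : α → α → Prop) (u z v : List α) : Prop :=
  ∃ u' v', TrEq I u u' ∧ Scat I u' z v' ∧ TrEq I v' v

/-- u ∼⊲_N z ⊳∼ v : as EqScatEq, with the number of blocks bounded by N -/
def EqScatEqLe (I : α → α → Prop) (N : ℕ) (u z v : List α) : Prop :=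
  ∃ u' v', TrEq I u u' ∧ (∃ n ≤ N, ScatN I n u' z v') ∧ TrEq I v' v

/-- Reordering concatenation of words. -/
def rconc (I : α → α → Prop) : List α → List α → Set (List α)
  | [], v => {v}
  | a :: u, [] => {a :: u}
  | a :: u, b :: v =>
      (List.cons a) '' rconc I u (b :: v) ∪
      {z | WIndep I (a :: u) [b] ∧ ∃ w ∈ rconc I (a :: u) v, z = b :: w}
termination_by u v => u.length + v.length

/-- Reordering concatenation lifted to languages. -/
def rconcL (I : α → α → Prop) (L L' : Set (List α)) : Set (List α) :=
  {z | ∃ u ∈ L, ∃ v ∈ L', z ∈ rconc I u v}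

/-- The reorderable part of a language w.r.t. a word. -/
def RPart (I : α → α → Prop) (u : List α) (L : Set (List α)) : Set (List α) :=
  {v ∈ L | WIndep I v u}

/-- The reordering derivative of a language along a word. -/
def RDeriv (I : α → α → Prop) (u : List α) (L : Set (List α)) : Set (List α) :=
  {v | ∃ z ∈ L, EqScat I u z v}

/-- Syntactic reorderable part of a regexp w.r.t. a letter. -/
noncomputable def Rexp (I : α → α → Prop) (a : α) : RegularExpression α → RegularExpression α
  | zero => zero
  | epsilon => epsilon
  | char b => if I a b then char b else zero
  | plus E F => plus (Rexp I a E) (Rexp I a F)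
  | comp E F => comp (Rexp I a E) (Rexp I a F)
  | RegularExpression.star E => star (Rexp I a E)

/-- Brzozowski reordering derivative of a regexp along a letter. -/
noncomputable def Dexp (I : α → α → Prop) (a : α) : RegularExpression α → RegularExpression α
  | zero => zero
  | epsilon => zero
  | char b => if a = b then epsilon else zero
  | plus E F => plus (Dexp I a E) (Dexp I a F)
  | comp E F => plus (comp (Dexp I a E) F) (comp (Rexp I a E) (Dexp I a F))
  | RegularExpression.star E => comp (star (Rexp I a E)) (comp (Dexp I a E) (star E))

/-- Syntactic reorderable part along a word. -/
noncomputable def RexpW (I : α → α → Prop) (u : List α) (E : RegularExpression α) :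
    RegularExpression α :=
  u.foldl (fun E a => Rexp I a E) E

/-- Brzozowski reordering derivative along a word. -/
noncomputable def DexpW (I : α → α → Prop) (u : List α) (E : RegularExpression α) :
    RegularExpression α :=
  u.foldl (fun E a => Dexp I a E) E

/-- Antimirov reordering parts-of-derivatives along a letter. -/
inductive Antim (I : α → α → Prop) : RegularExpression α → α → RegularExpression α → Prop
  | chr (a : α) : Antim I (char a) a epsilon
  | plusL {E F : RegularExpression α} {a E'} : Antim I E a E' → Antim I (plus E F) a E'
  | plusR {E F : RegularExpression α} {a F'} : Antim I F a F' → Antim I (plus E F) a F'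
  | compL {E F : RegularExpression α} {a E'} : Antim I E a E' → Antim I (comp E F) a (comp E' F)
  | compR {E F : RegularExpression α} {a F'} :
      Antim I F a F' → Antim I (comp E F) a (comp (Rexp I a E) F')
  | st {E : RegularExpression α} {a E'} :
      Antim I E a E' → Antim I (star E) a (comp (star (Rexp I a E)) (comp E' (star E)))

/-- Antimirov reordering parts-of-derivatives along a word. -/
inductive AntimW (I : α → α → Prop) : RegularExpression α → List α → RegularExpression α → Prop
  | nil (E : RegularExpression α) : AntimW I E [] E
  | snoc {E : RegularExpression α} {u E' a E''} :
      AntimW I E u E' → Antim I E' a E'' → AntimW I E (u ++ [a]) E''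

/-- The dependence graph of a word: vertices are positions; distinct positions
are adjacent when their letters are not independent. -/
def depGraph (I : α → α → Prop) (w : List α) : SimpleGraph (Fin w.length) where
  Adj i j := i ≠ j ∧ ¬(I (w.get i) (w.get j) ∧ I (w.get j) (w.get i))
  symm := by
    refine ⟨fun i j h => ?_⟩
    exact ⟨h.1.symm, fun hc => h.2 ⟨hc.2, hc.1⟩⟩
  loopless := by
    refine ⟨fun i h => ?_⟩
    exact h.1 rfl

/-- A word is connected if its dependence graph is connected. -/
def WordConnected (I : α → α → Prop) (w : List α) : Prop :=
  (depGraph I w).Preconnected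

/-- Least fixed point star for the trace-closing semantics. -/
def starI (I : α → α → Prop) (L : Set (List α)) : Set (List α) :=
  sInf {X | {([] : List α)} ∪ rconcL I L X ⊆ X}

/-- Trace-closing semantics of regular expressions. -/
def langI (I : α → α → Prop) : RegularExpression α → Set (List α)
  | zero => ∅
  | epsilon => {[]}
  | char a => {[a]}
  | plus E F => langI I E ∪ langI I F
  | comp E F => rconcL I (langI I E) (langI I F)
  | RegularExpression.star E => starI I (langI I E)

/-- L has (scattering) rank at most N. -/
def HasRankLe (I : α → α → Prop) (L : Set (List α)) (N : ℕ) : Prop :=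
  ∀ u v, u ++ v ∈ TrClosure I L → ∃ z ∈ L, EqScatEqLe I N u z v

/-- L has uniform (scattering) rank at most N. -/
def HasUniformRankLe (I : α → α → Prop) (L : Set (List α)) (N : ℕ) : Prop :=
  ∀ w ∈ TrClosure I L, ∃ z ∈ L, ∀ u v, w = u ++ v → EqScatEqLe I N u z v

/-- Star-connected regular expressions. -/
inductive StarConnected (I : α → α → Prop) : RegularExpression α → Prop
  | zero : StarConnected I zero
  | epsilon : StarConnected I epsilon
  | chr (a : α) : StarConnected I (char a)
  | plus {E F : RegularExpression α} :
      StarConnected I E → StarConnected I F → StarConnected I (plus E F)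
  | comp {E F : RegularExpression α} :
      StarConnected I E → StarConnected I F → StarConnected I (comp E F)
  | st {E : RegularExpression α} :
      StarConnected I E → (∀ w ∈ E.matches', WordConnected I w) → StarConnected I (star E)

/-- Refined Antimirov reordering parts-of-derivatives along a letter. -/
inductive RAntim (I : α → α → Prop) :
    RegularExpression α → α → RegularExpression α → RegularExpression α → Prop
  | chr (a : α) : RAntim I (char a) a epsilon epsilon
  | plusL {E F : RegularExpression α} {a El Er} :
      RAntim I E a El Er → RAntim I (plus E F) a El Er
  | plusR {E F : RegularExpression α} {a Fl Fr} :
      RAntim I F a Fl Fr → RAntim I (plus E F) a Fl Fr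
  | compL {E F : RegularExpression α} {a El Er} :
      RAntim I E a El Er → RAntim I (comp E F) a El (comp Er F)
  | compR {E F : RegularExpression α} {a Fl Fr} :
      RAntim I F a Fl Fr → RAntim I (comp E F) a (comp (Rexp I a E) Fl) Fr
  | st {E : RegularExpression α} {a El Er} :
      RAntim I E a El Er →
      RAntim I (star E) a (comp (star (Rexp I a E)) El) (comp Er (star E))

/-- Refined Antimirov relation lifted to nonempty lists of regexps (unbounded). -/
inductive RAntimL (I : α → α → Prop) :
    List (RegularExpression α) → α → List (RegularExpression α) → Prop
  | split {Γ Δ : List (RegularExpression α)} {E : RegularExpression α} {a El Er} :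
      RAntim I E a El Er →
      RAntimL I (Γ ++ E :: Δ) a (Γ.map (Rexp I a) ++ El :: Er :: Δ)
  | dropL {Γ Δ : List (RegularExpression α)} {E : RegularExpression α} {a El Er} :
      RAntim I E a El Er → [] ∈ El.matches' → Γ ≠ [] →
      RAntimL I (Γ ++ E :: Δ) a (Γ.map (Rexp I a) ++ Er :: Δ)
  | dropR {Γ Δ : List (RegularExpression α)} {E : RegularExpression α} {a El Er} :
      RAntim I E a El Er → [] ∈ Er.matches' → Δ ≠ [] →
      RAntimL I (Γ ++ E :: Δ) a (Γ.map (Rexp I a) ++ El :: Δ)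
  | dropBoth {Γ Δ : List (RegularExpression α)} {E : RegularExpression α} {a El Er} :
      RAntim I E a El Er → [] ∈ El.matches' → [] ∈ Er.matches' → Γ ≠ [] → Δ ≠ [] →
      RAntimL I (Γ ++ E :: Δ) a (Γ.map (Rexp I a) ++ Δ)

/-- Refined Antimirov relation along a word (unbounded). -/
inductive RAntimW (I : α → α → Prop) :
    RegularExpression α → List α → List (RegularExpression α) → Prop
  | nil (E : RegularExpression α) : RAntimW I E [] [E]
  | snoc {E : RegularExpression α} {u Γ a Γ'} :
      RAntimW I E u Γ → RAntimL I Γ a Γ' → RAntimW I E (u ++ [a]) Γ'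

/-- N-bounded refined Antimirov relation lifted to nonempty lists of regexps. -/
inductive RAntimLN (I : α → α → Prop) (N : ℕ) :
    List (RegularExpression α) → α → List (RegularExpression α) → Prop
  | split {Γ Δ : List (RegularExpression α)} {E : RegularExpression α} {a El Er} :
      RAntim I E a El Er → Γ.length + Δ.length < N →
      RAntimLN I N (Γ ++ E :: Δ) a (Γ.map (Rexp I a) ++ El :: Er :: Δ)
  | dropL {Γ Δ : List (RegularExpression α)} {E : RegularExpression α} {a El Er} :
      RAntim I E a El Er → [] ∈ El.matches' → Γ ≠ [] →
      RAntimLN I N (Γ ++ E :: Δ) a (Γ.map (Rexp I a) ++ Er :: Δ)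
  | dropR {Γ Δ : List (RegularExpression α)} {E : RegularExpression α} {a El Er} :
      RAntim I E a El Er → [] ∈ Er.matches' → Δ ≠ [] →
      RAntimLN I N (Γ ++ E :: Δ) a (Γ.map (Rexp I a) ++ El :: Δ)
  | dropBoth {Γ Δ : List (RegularExpression α)} {E : RegularExpression α} {a El Er} :
      RAntim I E a El Er → [] ∈ El.matches' → [] ∈ Er.matches' → Γ ≠ [] → Δ ≠ [] →
      RAntimLN I N (Γ ++ E :: Δ) a (Γ.map (Rexp I a) ++ Δ)

/-- N-bounded refined Antimirov relation along a word. -/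
inductive RAntimWN (I : α → α → Prop) (N : ℕ) :
    RegularExpression α → List α → List (RegularExpression α) → Prop
  | nil (E : RegularExpression α) : RAntimWN I N E [] [E]
  | snoc {E : RegularExpression α} {u Γ a Γ'} :
      RAntimWN I N E u Γ → RAntimLN I N Γ a Γ' → RAntimWN I N E (u ++ [a]) Γ'

/-!
Read letter by letter, `u ⊲ z ⊳ v` marks each letter of `z` as a letter of `u` or of `v`, a
letter of `v` being independent of the letters of `u` marked after it; the block conditions of
`ScatN` become the three constructors of `Interleave`. Markings compose: marking `z` for `s` and
then `s` for `u` and `v` amounts to marking `z` for `u` and its residue for `v`. Together with the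
fact that a marking of `z` for `s` can be carried along `s ∼ u v` (a four-case check for one swap
of independent letters, where the symmetry of `I` enters) this gives `D_{uv} = D_v ∘ D_u`.
-/

section TraceEquivalence

variable {I : α → α → Prop} {u v p q : List α}

theorem TrEq.perm (h : TrEq I u v) : u.Perm v := by
  induction h with
  | swap x y _ => exact ((List.Perm.swap _ _ []).append_left x).append_right y
  | refl u => exact List.Perm.refl u
  | symm _ ih => exact ih.symm
  | trans _ _ ih₁ ih₂ => exact ih₁.trans ih₂

theorem TrEq.append_left (w : List α) (h : TrEq I u v) : TrEq I (w ++ u) (w ++ v) := by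
  induction h with
  | swap x y hab => simpa [List.append_assoc] using TrEq.swap (w ++ x) y hab
  | refl u => exact TrEq.refl _
  | symm _ ih => exact ih.symm
  | trans _ _ ih₁ ih₂ => exact ih₁.trans ih₂

theorem TrEq.append_right (w : List α) (h : TrEq I u v) : TrEq I (u ++ w) (v ++ w) := by
  induction h with
  | swap x y hab => simpa [List.append_assoc] using TrEq.swap x (y ++ w) hab
  | refl u => exact TrEq.refl _
  | symm _ ih => exact ih.symm
  | trans _ _ ih₁ ih₂ => exact ih₁.trans ih₂

theorem TrEq.append (h₁ : TrEq I u p) (h₂ : TrEq I v q) : TrEq I (u ++ v) (p ++ q) :=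
  (h₁.append_right v).trans (h₂.append_left p)

theorem TrEq.cons (a : α) (h : TrEq I u v) : TrEq I (a :: u) (a :: v) :=
  h.append_left [a]

theorem trEq_cons_append_singleton {a : α} (h : ∀ b ∈ p, I a b) :
    TrEq I (a :: p) (p ++ [a]) := by
  induction p with
  | nil => exact TrEq.refl _
  | cons b p ih =>
    have hab : TrEq I (a :: b :: p) (b :: a :: p) := by
      simpa using TrEq.swap [] p (h b List.mem_cons_self)
    exact hab.trans ((ih fun c hc => h c (List.mem_cons_of_mem b hc)).cons b)

end TraceEquivalence

inductive Interleave (I : α → α → Prop) : List α → List α → List α → Prop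
  | nil : Interleave I [] [] []
  | consLeft {u z v : List α} (a : α) : Interleave I u z v → Interleave I (a :: u) (a :: z) v
  | consRight {u z v : List α} {a : α} :
      (∀ b ∈ u, I a b) → Interleave I u z v → Interleave I u (a :: z) (a :: v)

namespace Interleave

variable {I : α → α → Prop} {u v w z z' : List α}

theorem nil_left (z : List α) : Interleave I [] z z := by
  induction z with
  | nil => exact nil
  | cons a z ih => exact consRight (by simp) ih

theorem eq_of_nil_left (h : Interleave I [] z v) : z = v := by
  generalize hu : ([] : List α) = u at h
  induction h with
  | nil => rfl
  | consLeft => cases hu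
  | consRight _ _ ih => rw [ih hu]

theorem append_left (w : List α) (h : Interleave I u z v) : Interleave I (w ++ u) (w ++ z) v := by
  induction w with
  | nil => exact h
  | cons a w ih => exact consLeft a ih

theorem append_right (hw : ∀ b ∈ w, ∀ c ∈ u, I b c) (h : Interleave I u z v) :
    Interleave I u (w ++ z) (w ++ v) := by
  induction w with
  | nil => exact h
  | cons a w ih =>
    exact consRight (hw a List.mem_cons_self)
      (ih fun b hb => hw b (List.mem_cons_of_mem a hb))

theorem of_append (u v : List α) : Interleave I u (u ++ v) v := by
  simpa using (nil_left v).append_left u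

theorem trEq (h : Interleave I u z v) : TrEq I z (u ++ v) := by
  induction h with
  | nil => exact TrEq.refl _
  | consLeft a _ ih => exact ih.cons a
  | consRight ha _ ih =>
    refine (ih.cons _).trans ?_
    simpa using (trEq_cons_append_singleton ha).append_right _

theorem perm (h : Interleave I u z v) : z.Perm (u ++ v) :=
  h.trEq.perm

theorem split {s : List α} (h : Interleave I s z w) (hs : Interleave I u s v) :
    ∃ y, Interleave I u z y ∧ Interleave I v y w := by
  induction h generalizing u v with
  | nil =>
    cases hs
    exact ⟨[], nil, nil⟩
  | consLeft a _ ih =>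
    cases hs with
    | consLeft _ hs =>
      obtain ⟨y, h₁, h₂⟩ := ih hs
      exact ⟨y, consLeft a h₁, h₂⟩
    | consRight ha hs =>
      obtain ⟨y, h₁, h₂⟩ := ih hs
      exact ⟨a :: y, consRight ha h₁, consLeft a h₂⟩
  | consRight ha _ ih =>
    obtain ⟨y, h₁, h₂⟩ := ih hs
    have hmem : ∀ b, b ∈ u ++ v → b ∈ _ := fun b hb => hs.perm.mem_iff.mpr hb
    exact ⟨_ :: y, consRight (fun b hb => ha b (hmem b (List.mem_append_left v hb))) h₁,
      consRight (fun b hb => ha b (hmem b (List.mem_append_right u hb))) h₂⟩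

theorem join {y : List α} (h : Interleave I u z y) (hy : Interleave I v y w) :
    ∃ s, Interleave I s z w ∧ Interleave I u s v := by
  induction h generalizing v w with
  | nil =>
    cases hy
    exact ⟨[], nil, nil⟩
  | consLeft a _ ih =>
    obtain ⟨s, h₁, h₂⟩ := ih hy
    exact ⟨a :: s, consLeft a h₁, consLeft a h₂⟩
  | consRight ha _ ih =>
    cases hy with
    | consLeft _ hy =>
      obtain ⟨s, h₁, h₂⟩ := ih hy
      exact ⟨_ :: s, consLeft _ h₁, consRight ha h₂⟩
    | consRight ha' hy =>
      obtain ⟨s, h₁, h₂⟩ := ih hy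
      refine ⟨s, consRight (fun b hb => ?_) h₁, h₂⟩
      rcases List.mem_append.mp (h₂.perm.subset hb) with hb | hb
      exacts [ha b hb, ha' b hb]

theorem exists_swap_head (hsym : Symmetric I) {a b : α} (hab : I a b) {y : List α}
    (h : Interleave I u (a :: b :: y) v) :
    ∃ u' v', Interleave I u' (b :: a :: y) v' ∧ TrEq I u u' ∧ TrEq I v v' := by
  cases h with
  | consLeft _ h =>
    cases h with
    | consLeft _ h =>
      exact ⟨_, _, consLeft b (consLeft a h), by simpa using TrEq.swap [] _ hab, TrEq.refl _⟩
    | consRight hb h =>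
      refine ⟨_, _, consRight ?_ (consLeft a h), TrEq.refl _, TrEq.refl _⟩
      simpa [hsym hab] using hb
  | consRight ha h =>
    cases h with
    | consLeft _ h =>
      exact ⟨_, _, consLeft b (consRight (fun c hc => ha c (List.mem_cons_of_mem b hc)) h),
        TrEq.refl _, TrEq.refl _⟩
    | consRight hb h =>
      exact ⟨_, _, consRight hb (consRight ha h), TrEq.refl _, by simpa using TrEq.swap [] _ hab⟩

theorem exists_swap (hsym : Symmetric I) {a b : α} (hab : I a b) (x y : List α)
    (h : Interleave I u (x ++ [a, b] ++ y) v) :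
    ∃ u' v', Interleave I u' (x ++ [b, a] ++ y) v' ∧ TrEq I u u' ∧ TrEq I v v' := by
  induction x generalizing u v with
  | nil => exact exists_swap_head hsym hab h
  | cons c x ih =>
    cases h with
    | consLeft _ h =>
      obtain ⟨u', v', h', hu, hv⟩ := ih h
      exact ⟨c :: u', v', consLeft c h', hu.cons c, hv⟩
    | consRight hc h =>
      obtain ⟨u', v', h', hu, hv⟩ := ih h
      exact ⟨u', c :: v', consRight (fun d hd => hc d (hu.perm.mem_iff.mpr hd)) h', hu,
        hv.cons c⟩

theorem exists_of_trEq (hsym : Symmetric I) (hz : TrEq I z z') (h : Interleave I u z v) :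
    ∃ u' v', Interleave I u' z' v' ∧ TrEq I u u' ∧ TrEq I v v' := by
  let Transports (z z' : List α) : Prop := ∀ u v, Interleave I u z v →
    ∃ u' v', Interleave I u' z' v' ∧ TrEq I u u' ∧ TrEq I v v'
  suffices Transports z z' ∧ Transports z' z from this.1 u v h
  clear h
  induction hz with
  | swap x y hab => exact ⟨fun _ _ => exists_swap hsym hab x y,
      fun _ _ => exists_swap hsym (hsym hab) x y⟩
  | refl => exact ⟨fun u v h => ⟨u, v, h, TrEq.refl u, TrEq.refl v⟩,
      fun u v h => ⟨u, v, h, TrEq.refl u, TrEq.refl v⟩⟩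
  | symm _ ih => exact ih.symm
  | trans _ _ ih₁ ih₂ =>
    refine ⟨fun u v h => ?_, fun u v h => ?_⟩
    · obtain ⟨u₁, v₁, h₁, hu₁, hv₁⟩ := ih₁.1 u v h
      obtain ⟨u₂, v₂, h₂, hu₂, hv₂⟩ := ih₂.1 u₁ v₁ h₁
      exact ⟨u₂, v₂, h₂, hu₁.trans hu₂, hv₁.trans hv₂⟩
    · obtain ⟨u₁, v₁, h₁, hu₁, hv₁⟩ := ih₂.2 u v h
      obtain ⟨u₂, v₂, h₂, hu₂, hv₂⟩ := ih₁.2 u₁ v₁ h₁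
      exact ⟨u₂, v₂, h₂, hu₁.trans hu₂, hv₁.trans hv₂⟩

end Interleave

theorem flatten_map_range_succ (f : ℕ → List α) (n : ℕ) :
    ((List.range (n + 1)).map f).flatten
      = f 0 ++ ((List.range n).map (fun i => f (i + 1))).flatten := by
  simp [List.range_succ_eq_map, Function.comp_def]

theorem mem_flatten_map_range {f : ℕ → List α} {n i : ℕ} (h₁ : 1 ≤ i) (h₂ : i ≤ n) {c : α}
    (hc : c ∈ f i) : c ∈ ((List.range n).map (fun i => f (i + 1))).flatten :=
  List.mem_flatten.mpr ⟨f i, List.mem_map.mpr ⟨i - 1, List.mem_range.mpr (by omega),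
    by rw [Nat.sub_add_cancel h₁]⟩, hc⟩

-- The body of `ScatN`: `ScatN I n u z v` unfolds to `∃ us vs, IsScatBlocks I n us vs u z v`.
def IsScatBlocks (I : α → α → Prop) (n : ℕ) (us vs : ℕ → List α) (u z v : List α) : Prop :=
  (∀ i, 1 ≤ i → i ≤ n → us i ≠ []) ∧
  (∀ j, 1 ≤ j → j ≤ n - 1 → vs j ≠ []) ∧
  u = ((List.range n).map (fun i => us (i + 1))).flatten ∧
  v = ((List.range (n + 1)).map vs).flatten ∧
  z = vs 0 ++ ((List.range n).map (fun i => us (i + 1) ++ vs (i + 1))).flatten ∧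
  (∀ i j, 1 ≤ i → i ≤ n → j < i → WIndep I (vs j) (us i))

section Scattering

variable {I : α → α → Prop} {n : ℕ} {us vs : ℕ → List α} {u z v : List α} {a : α}

theorem scatN_zero_self (z : List α) : ScatN I 0 [] z z :=
  ⟨fun _ => [], fun _ => z, fun _ _ _ => by omega, fun _ _ _ => by omega, rfl, by simp, by simp,
    fun _ _ _ _ => by omega⟩

theorem ScatN.exists_succ (h : ScatN I (n + 1) u z v) :
    ∃ v₀ u₁ u' z' v', ScatN I n u' z' v' ∧ WIndep I v₀ (u₁ ++ u') ∧
      u = u₁ ++ u' ∧ z = v₀ ++ (u₁ ++ z') ∧ v = v₀ ++ v' := by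
  obtain ⟨us, vs, hus, hvs, rfl, rfl, rfl, hind⟩ := h
  refine ⟨vs 0, us 1, _, _, _, ⟨fun i => us (i + 1), fun j => vs (j + 1),
    fun i h₁ h₂ => hus (i + 1) (by omega) (by omega),
    fun j h₁ h₂ => hvs (j + 1) (by omega) (by omega), rfl, rfl, rfl,
    fun i j h₁ h₂ h₃ => hind (i + 1) (j + 1) (by omega) (by omega) (by omega)⟩, ?_, ?_, ?_, ?_⟩
  · intro b hb c hc
    rcases List.mem_append.mp hc with hc | hc
    · exact hind 1 0 le_rfl (by omega) one_pos b hb c hc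
    · obtain ⟨_, hl, hcl⟩ := List.mem_flatten.mp hc
      obtain ⟨i, hi, rfl⟩ := List.mem_map.mp hl
      exact hind (i + 1 + 1) 0 (by omega) (by simp at hi; omega) (by omega) b hb c hcl
  all_goals simp [flatten_map_range_succ]

theorem ScatN.interleave (h : ScatN I n u z v) : Interleave I u z v := by
  induction n generalizing u z v with
  | zero =>
    obtain ⟨us, vs, -, -, rfl, rfl, rfl, -⟩ := h
    simpa [flatten_map_range_succ] using Interleave.nil_left (vs 0)
  | succ n ih =>
    obtain ⟨v₀, u₁, u', z', v', h', hind, rfl, rfl, rfl⟩ := h.exists_succ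
    exact ((ih h').append_left u₁).append_right hind

theorem ScatN.cons_right (ha : ∀ b ∈ u, I a b) (h : ScatN I n u z v) :
    ScatN I n u (a :: z) (a :: v) := by
  obtain ⟨us, vs, hus, hvs, rfl, rfl, rfl, hind⟩ := h
  refine ⟨us, Function.update vs 0 (a :: vs 0), hus, fun j h₁ h₂ => ?_, rfl, ?_, ?_,
    fun i j h₁ h₂ h₃ => ?_⟩
  · rw [Function.update_of_ne (by omega)]
    exact hvs j h₁ h₂
  · simp [flatten_map_range_succ]
  · simp
  · rcases Nat.eq_zero_or_pos j with rfl | hj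
    · intro b hb c hc
      rw [Function.update_self] at hb
      rcases List.mem_cons.mp hb with rfl | hb
      exacts [ha c (mem_flatten_map_range h₁ h₂ hc), hind i 0 h₁ h₂ h₃ b hb c hc]
    · rw [Function.update_of_ne (by omega)]
      exact hind i j h₁ h₂ h₃

theorem IsScatBlocks.scatN_cons_left_of_nil (h : IsScatBlocks I (n + 1) us vs u z v)
    (h0 : vs 0 = []) : ScatN I (n + 1) (a :: u) (a :: z) v := by
  obtain ⟨hus, hvs, rfl, rfl, rfl, hind⟩ := h
  refine ⟨Function.update us 1 (a :: us 1), vs, fun i h₁ h₂ => ?_, hvs, ?_, rfl, ?_,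
    fun i j h₁ h₂ h₃ => ?_⟩
  · rcases eq_or_ne i 1 with rfl | hi
    · simp
    · rw [Function.update_of_ne hi]
      exact hus i h₁ h₂
  · simp [flatten_map_range_succ]
  · simp [flatten_map_range_succ, h0]
  · rcases eq_or_ne i 1 with rfl | hi
    · obtain rfl : j = 0 := by omega
      simp [h0, WIndep]
    · rw [Function.update_of_ne hi]
      exact hind i j h₁ h₂ h₃

theorem IsScatBlocks.scatN_succ_cons_left (h : IsScatBlocks I n us vs u z v)
    (h0 : n = 0 ∨ vs 0 ≠ []) : ScatN I (n + 1) (a :: u) (a :: z) v := by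
  obtain ⟨hus, hvs, rfl, rfl, rfl, hind⟩ := h
  refine ⟨fun i => if i = 1 then [a] else us (i - 1), fun j => if j = 0 then [] else vs (j - 1),
    fun i h₁ h₂ => ?_, fun j h₁ h₂ => ?_, ?_, ?_, ?_, fun i j h₁ h₂ h₃ => ?_⟩
  · dsimp only
    split_ifs
    · simp
    · exact hus (i - 1) (by omega) (by omega)
  · dsimp only
    rw [if_neg (by omega)]
    rcases eq_or_ne j 1 with rfl | hj
    · exact h0.resolve_left (by omega)
    · exact hvs (j - 1) (by omega) (by omega)
  · simp [flatten_map_range_succ]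
  · simp [flatten_map_range_succ]
  · simp [flatten_map_range_succ]
  · rcases eq_or_ne j 0 with rfl | hj
    · simp [WIndep]
    · dsimp only
      rw [if_neg hj, if_neg (by omega)]
      exact hind (i - 1) (j - 1) (by omega) (by omega) (by omega)

theorem ScatN.exists_cons_left (h : ScatN I n u z v) : ∃ m, ScatN I m (a :: u) (a :: z) v := by
  obtain ⟨us, vs, h⟩ := h
  rcases n with _ | n
  · exact ⟨1, IsScatBlocks.scatN_succ_cons_left h (Or.inl rfl)⟩
  · by_cases h0 : vs 0 = []
    · exact ⟨n + 1, IsScatBlocks.scatN_cons_left_of_nil h h0⟩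
    · exact ⟨n + 2, IsScatBlocks.scatN_succ_cons_left h (Or.inr h0)⟩

theorem Interleave.scat (h : Interleave I u z v) : Scat I u z v := by
  induction h with
  | nil => exact ⟨0, scatN_zero_self []⟩
  | consLeft a _ ih =>
    obtain ⟨n, h⟩ := ih
    exact h.exists_cons_left
  | consRight ha _ ih =>
    obtain ⟨n, h⟩ := ih
    exact ⟨n, h.cons_right ha⟩

theorem scat_iff_interleave : Scat I u z v ↔ Interleave I u z v :=
  ⟨fun ⟨_, h⟩ => h.interleave, Interleave.scat⟩

end Scattering

section ReorderingDerivative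

variable {I : α → α → Prop} {u u' v z w : List α}

theorem eqScat_iff : EqScat I u z v ↔ ∃ u', TrEq I u u' ∧ Interleave I u' z v := by
  simp only [EqScat, scat_iff_interleave]

theorem eqScat_nil_iff : EqScat I [] z v ↔ z = v := by
  rw [eqScat_iff]
  constructor
  · rintro ⟨u', hu', h⟩
    obtain rfl : u' = [] := List.nil_perm.mp hu'.perm
    exact h.eq_of_nil_left
  · rintro rfl
    exact ⟨[], TrEq.refl [], Interleave.nil_left z⟩

theorem eqScat_append_iff (hsym : Symmetric I) :
    EqScat I (u ++ v) z w ↔ ∃ y, EqScat I u z y ∧ EqScat I v y w := by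
  simp only [eqScat_iff]
  constructor
  · rintro ⟨s, hs, h⟩
    obtain ⟨p, q, hpq, hup, hvq⟩ := (Interleave.of_append u v).exists_of_trEq hsym hs
    obtain ⟨y, hpy, hqy⟩ := h.split hpq
    exact ⟨y, ⟨p, hup, hpy⟩, q, hvq, hqy⟩
  · rintro ⟨y, ⟨p, hup, hpy⟩, q, hvq, hqy⟩
    obtain ⟨s, hs, hpq⟩ := hpy.join hqy
    exact ⟨s, (hup.append hvq).trans hpq.trEq.symm, hs⟩

theorem EqScat.of_trEq (h : TrEq I u u') (hs : EqScat I u' z v) : EqScat I u z v :=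
  let ⟨s, hs, hsc⟩ := hs
  ⟨s, h.trans hs, hsc⟩

theorem rDeriv_nil (L : Set (List α)) : RDeriv I [] L = L := by
  ext v
  simp [RDeriv, eqScat_nil_iff]

theorem rDeriv_append (hsym : Symmetric I) (u v : List α) (L : Set (List α)) :
    RDeriv I (u ++ v) L = RDeriv I v (RDeriv I u L) := by
  ext w
  simp only [RDeriv, Set.mem_ofPred_eq, eqScat_append_iff hsym]
  constructor
  · rintro ⟨z, hz, y, hzy, hyw⟩
    exact ⟨y, ⟨z, hz, hzy⟩, hyw⟩
  · rintro ⟨y, ⟨z, hz, hzy⟩, hyw⟩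
    exact ⟨z, hz, y, hzy, hyw⟩

theorem rDeriv_congr (h : TrEq I u u') (L : Set (List α)) : RDeriv I u L = RDeriv I u' L := by
  ext w
  exact ⟨fun ⟨z, hz, hs⟩ => ⟨z, hz, hs.of_trEq h.symm⟩, fun ⟨z, hz, hs⟩ => ⟨z, hz, hs.of_trEq h⟩⟩

end ReorderingDerivative

theorem stmt5_general {α : Type u} (I : α → α → Prop)
    (hsym : Symmetric I) (L : Set (List α)) :
    RDeriv I [] L = L ∧
    (∀ u v : List α, RDeriv I (u ++ v) L = RDeriv I v (RDeriv I u L)) ∧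
    (∀ u u' : List α, TrEq I u u' → RDeriv I u L = RDeriv I u' L) :=
  ⟨rDeriv_nil L, fun u v => rDeriv_append hsym u v L, fun _ _ h => rDeriv_congr h L⟩

/-- the reordering derivative is a ∼-invariant right action. -/
theorem stmt5 {α : Type u} [Fintype α] (I : α → α → Prop)
    (hirr : Irreflexive I) (hsym : Symmetric I) (L : Set (List α)) :
    RDeriv I [] L = L ∧
    (∀ u v : List α, RDeriv I (u ++ v) L = RDeriv I v (RDeriv I u L)) ∧
    (∀ u u' : List α, TrEq I u u' → RDeriv I u L = RDeriv I u' L) :=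
  stmt5_general I hsym L
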